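/- arXiv:1806.04636 — 6 statements merged into one kernel-verified Lean document; each statement's English description precedes it below -/
import Mathlib

section
/- Let ν be a Borel probability measure on ℝ^n. Then inf{dim_H(E) : E ⊆ ℝ^n Borel, ν(E) > 0} = sup{t ∈ [0,∞) : ν is absolutely continuous with respect to ℋ^t}, where ℋ^t is the t-dimensional Hausdorff measure on ℝ^n. -/
open MeasureTheory Metric Set
open scoped NNReal ENNReal

/-! A set of Hausdorff dimension `< t` is `ℋ^t`-null, and a `ℋ^t`-null set has Hausdorff
dimension `≤ t`. So `ν ≪ ℋ^t` forces `t ≤ dim_H E` whenever `ν E > 0`; conversely, if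
`t < dim_H E` for every Borel set of positive measure, every `ℋ^t`-null set lies in a Borel
`ℋ^t`-null set, whose dimension is `≤ t`, hence is `ν`-null. -/

section

variable {X : Type*} [EMetricSpace X] [MeasurableSpace X] [BorelSpace X] {ν : Measure X}
  {t : ℝ≥0}

theorem le_dimH_of_absolutelyContinuous_hausdorffMeasure (hν : ν ≪ μH[t]) {E : Set X}
    (hE : ν E ≠ 0) : (t : ℝ≥0∞) ≤ dimH E :=
  le_of_not_gt fun hlt => hE (hν (hausdorffMeasure_of_dimH_lt hlt))

theorem absolutelyContinuous_hausdorffMeasure_of_lt_dimH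
    (h : ∀ E, MeasurableSet E → ν E ≠ 0 → (t : ℝ≥0∞) < dimH E) : ν ≪ μH[t] := by
  intro S hS
  obtain ⟨E, hSE, hE, hE_null⟩ := exists_measurable_superset_of_null hS
  have hdim : dimH E ≤ t := dimH_le_of_hausdorffMeasure_ne_top (by simp [hE_null])
  exact measure_mono_null hSE (not_imp_comm.mp (h E hE) hdim.not_gt)

end

theorem stmt_0_general (n : ℕ) (ν : Measure (EuclideanSpace ℝ (Fin n))) :
    (⨅ (E : Set (EuclideanSpace ℝ (Fin n))) (_ : MeasurableSet E) (_ : 0 < ν E), dimH E)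
      = ⨆ (t : ℝ≥0) (_ : ν ≪ Measure.hausdorffMeasure (t : ℝ)), (t : ℝ≥0∞) := by
  apply le_antisymm
  · refine ENNReal.le_of_forall_nnreal_lt fun t ht => le_iSup₂_of_le t ?_ le_rfl
    refine absolutelyContinuous_hausdorffMeasure_of_lt_dimH fun E hE hνE => ?_
    exact ht.trans_le (iInf₂_le_of_le E hE (iInf_le _ (pos_iff_ne_zero.mpr hνE)))
  · exact iSup₂_le fun t hν => le_iInf₂ fun E _ => le_iInf fun hνE =>
      le_dimH_of_absolutelyContinuous_hausdorffMeasure hν hνE.ne'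

theorem stmt_0 (n : ℕ) (ν : Measure (EuclideanSpace ℝ (Fin n)))
    [IsProbabilityMeasure ν] :
    (⨅ (E : Set (EuclideanSpace ℝ (Fin n))) (_ : MeasurableSet E) (_ : 0 < ν E), dimH E)
      = ⨆ (t : ℝ≥0) (_ : ν ≪ Measure.hausdorffMeasure (t : ℝ)), (t : ℝ≥0∞) :=
  stmt_0_general n ν
end

section
/- Let ν be a Borel probability measure on ℝ^n. Then inf{dim_H(E) : E ⊆ ℝ^n Borel, ν(E) = 1} = inf{t ∈ [0,∞) : ν and ℋ^t are mutually singular}, where ℋ^t is the t-dimensional Hausdorff measure on ℝ^n. -/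
open MeasureTheory Metric Set
open scoped NNReal ENNReal

section

variable {X : Type*} [EMetricSpace X] [MeasurableSpace X] [BorelSpace X] {ν : Measure X}

theorem MeasureTheory.Measure.MutuallySingular.dimH_compl_nullSet_le {t : ℝ≥0}
    (h : ν ⟂ₘ μH[t]) : dimH h.nullSetᶜ ≤ t := by
  by_contra! hlt
  simpa [h.measure_compl_nullSet] using hausdorffMeasure_of_lt_dimH hlt

theorem mutuallySingular_hausdorffMeasure_of_dimH_lt {E : Set X} {t : ℝ≥0}
    (hE : MeasurableSet E) (hνE : ν Eᶜ = 0) (hdim : dimH E < t) : ν ⟂ₘ μH[t] :=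
  ⟨Eᶜ, hE.compl, hνE, by rw [compl_compl]; exact hausdorffMeasure_of_dimH_lt hdim⟩

end

theorem stmt_1 (n : ℕ) (ν : Measure (EuclideanSpace ℝ (Fin n)))
    [IsProbabilityMeasure ν] :
    (⨅ (E : Set (EuclideanSpace ℝ (Fin n))) (_ : MeasurableSet E) (_ : ν E = 1), dimH E)
      = ⨅ (t : ℝ≥0) (_ : ν ⟂ₘ Measure.hausdorffMeasure (t : ℝ)), (t : ℝ≥0∞) := by
  apply le_antisymm
  · refine le_iInf₂ fun t ht => ?_
    have hfull : ν ht.nullSetᶜ = 1 :=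
      (prob_compl_eq_one_iff ht.measurableSet_nullSet).2 ht.measure_nullSet
    exact iInf₂_le_of_le _ ht.measurableSet_nullSet.compl <|
      iInf_le_of_le hfull ht.dimH_compl_nullSet_le
  · refine le_iInf₂ fun E hE => le_iInf fun hνE => ?_
    by_contra! hlt
    obtain ⟨t, hEt, ht⟩ := ENNReal.lt_iff_exists_nnreal_btwn.1 hlt
    have hsing : ν ⟂ₘ μH[t] :=
      mutuallySingular_hausdorffMeasure_of_dimH_lt hE ((prob_compl_eq_zero_iff hE).2 hνE) hEt
    exact ht.not_ge (iInf₂_le t hsing)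
end

section
/- Let ν be a Borel probability measure on ℝ^n. Then inf{dim_H(E) : E ⊆ ℝ^n Borel, ν(E) > 0} equals the ν-essential infimum over x of the lower local dimension liminf_{r→0⁺} log ν(B(x,r))/log r. -/
open MeasureTheory Metric Set Filter
open scoped NNReal ENNReal Topology

/-- The lower local dimension of a measure `ν` at a point `x`:
`liminf_{r → 0⁺} log ν(B(x,r)) / log r`, equal to `∞` when `ν(B(x,r)) = 0`
for arbitrarily small `r` (since `log 0 = -∞`). -/
noncomputable def lowerLocalDim {n : ℕ} (ν : Measure (EuclideanSpace ℝ (Fin n)))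
    (x : EuclideanSpace ℝ (Fin n)) : ℝ≥0∞ :=
  Filter.liminf
    (fun r : ℝ => if ν (ball x r) = 0 then ∞
      else ENNReal.ofReal (Real.log (ν (ball x r)).toReal / Real.log r))
    (𝓝[>] (0 : ℝ))

/-!
If `c < lowerLocalDim ν x` for `ν`-a.e. `x` and `0 < ν E`, then on a piece of `E` of positive
measure one has `ν (ball x r) ≤ r ^ c` uniformly for all small `r`, and the mass distribution
principle gives `0 < ν ≤ μH[c]` on that piece, so `c ≤ dimH E`. Conversely, if
`lowerLocalDim ν x < t` on a set `A` of positive measure, every point of `A` is the centre of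
arbitrarily small balls with `r ^ t ≤ ν (ball x r)`. By Vitali, disjoint such balls of radius `< δ`
cover `A` after enlargement by `4`, so `A` has a cover with
`∑ diam ^ s ≲ δ ^ (s - t) ∑ ν (ball) ≤ δ ^ (s - t) ν univ`. Hence `μH[s] A = 0` for `s > t`, and
a measurable hull of `A` for `μH[s]` has dimension `≤ s`.
-/

section MetricSpace

variable {X : Type*} [MetricSpace X]

theorem ediam_closedBall_le_ofReal (c : X) (r : ℝ) :
    ediam (closedBall c r) ≤ ENNReal.ofReal (2 * r) :=
  ediam_le_of_forall_dist_le fun y hy z hz => by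
    linarith [dist_triangle_right y z c, mem_closedBall.1 hy, mem_closedBall.1 hz]

theorem ediam_closedBall_rpow_le {c : X} {ρ δ s t : ℝ} (hρ : ρ ∈ Ioo 0 δ) (hs : 0 ≤ s)
    (hts : t ≤ s) :
    ediam (closedBall c (4 * ρ)) ^ s ≤
      ENNReal.ofReal (8 ^ s * δ ^ (s - t)) * ENNReal.ofReal (ρ ^ t) := by
  have hdiam : ediam (closedBall c (4 * ρ)) ≤ ENNReal.ofReal (8 * ρ) :=
    (ediam_closedBall_le_ofReal c _).trans_eq (by ring_nf)
  have hpow : ρ ^ s = ρ ^ (s - t) * ρ ^ t := by rw [← Real.rpow_add hρ.1, sub_add_cancel]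
  calc ediam (closedBall c (4 * ρ)) ^ s ≤ ENNReal.ofReal (8 * ρ) ^ s :=
        ENNReal.rpow_le_rpow hdiam hs
    _ = ENNReal.ofReal (8 ^ s * ρ ^ (s - t) * ρ ^ t) := by
        rw [ENNReal.ofReal_rpow_of_nonneg (by linarith [hρ.1]) hs,
          Real.mul_rpow (by norm_num) hρ.1.le, hpow, mul_assoc]
    _ ≤ ENNReal.ofReal (8 ^ s * δ ^ (s - t) * ρ ^ t) :=
        ENNReal.ofReal_le_ofReal <| mul_le_mul_of_nonneg_right
          (mul_le_mul_of_nonneg_left (Real.rpow_le_rpow hρ.1.le hρ.2.le (sub_nonneg.2 hts))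
            (by positivity)) (Real.rpow_nonneg hρ.1.le t)
    _ = ENNReal.ofReal (8 ^ s * δ ^ (s - t)) * ENNReal.ofReal (ρ ^ t) :=
        ENNReal.ofReal_mul (by have := hρ.1.trans hρ.2; positivity)

variable [MeasurableSpace X] (ν : Measure X)

theorem measure_closedBall_le_rpow_of_measure_ball_le {x : X} {D ε d : ℝ} (hDε : D < ε)
    (hd : 0 ≤ d) (h : ∀ r ∈ Ioo D ε, ν (ball x r) ≤ ENNReal.ofReal (r ^ d)) :
    ν (closedBall x D) ≤ ENNReal.ofReal (D ^ d) := by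
  have hcont : Tendsto (fun r : ℝ => ENNReal.ofReal (r ^ d)) (𝓝[>] D)
      (𝓝 (ENNReal.ofReal (D ^ d))) :=
    ENNReal.tendsto_ofReal <|
      (Real.continuousAt_rpow_const D d (Or.inr hd)).tendsto.mono_left nhdsWithin_le_nhds
  refine ge_of_tendsto hcont ?_
  filter_upwards [Ioo_mem_nhdsGT hDε] with r hr
  exact (measure_mono (closedBall_subset_ball hr.1)).trans (h r hr)

variable [BorelSpace X]

/-- The mass distribution principle. -/
theorem measure_le_hausdorffMeasure_of_measure_ball_le {A : Set X} {d ε : ℝ} (hd : 0 ≤ d)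
    (hε : 0 < ε) (h : ∀ x ∈ A, ∀ r ∈ Ioo 0 ε, ν (ball x r) ≤ ENNReal.ofReal (r ^ d)) :
    ν A ≤ μH[d] A := by
  rw [Measure.hausdorffMeasure_apply]
  refine le_iSup₂_of_le (ENNReal.ofReal (ε / 2)) (ENNReal.ofReal_pos.2 (half_pos hε)) ?_
  refine le_iInf₂ fun T hAT => le_iInf fun hT => ?_
  calc ν A = ν (⋃ n, T n ∩ A) := by rw [← iUnion_inter, inter_eq_right.2 hAT]
    _ ≤ ∑' n, ν (T n ∩ A) := measure_iUnion_le _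
    _ ≤ ∑' n, ⨆ _ : (T n).Nonempty, ediam (T n) ^ d := ENNReal.tsum_le_tsum fun n => ?_
  rcases (T n ∩ A).eq_empty_or_nonempty with hTA | ⟨x, hxT, hxA⟩
  · simp [hTA]
  have hbdd : ediam (T n) ≠ ∞ := ne_top_of_le_ne_top ENNReal.ofReal_ne_top (hT n)
  have hdiam : diam (T n) ≤ ε / 2 := ENNReal.toReal_le_of_le_ofReal (half_pos hε).le (hT n)
  have hball : T n ⊆ closedBall x (diam (T n)) := fun y hy =>
    mem_closedBall.2 (dist_le_diam_of_mem' hbdd hy hxT)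
  refine le_iSup_of_le ⟨x, hxT⟩ ?_
  calc ν (T n ∩ A) ≤ ν (closedBall x (diam (T n))) := measure_mono (inter_subset_left.trans hball)
    _ ≤ ENNReal.ofReal (diam (T n) ^ d) :=
        measure_closedBall_le_rpow_of_measure_ball_le ν (by linarith) hd
          fun r hr => h x hxA r ⟨diam_nonneg.trans_lt hr.1, hr.2⟩
    _ = ediam (T n) ^ d := by
        rw [← ENNReal.ofReal_rpow_of_nonneg diam_nonneg hd, diam, ENNReal.ofReal_toReal hbdd]

theorem exists_countable_closedBall_cover_of_frequently_rpow_le_measure_ball [SFinite ν]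
    {A : Set X} {t δ : ℝ} (hδ : 0 < δ)
    (h : ∀ x ∈ A, ∃ᶠ r in 𝓝[>] 0, ENNReal.ofReal (r ^ t) ≤ ν (ball x r)) :
    ∃ (u : Set X) (ρ : X → ℝ), u.Countable ∧ (∀ b ∈ u, ρ b ∈ Ioo 0 δ) ∧
      A ⊆ ⋃ b ∈ u, closedBall b (4 * ρ b) ∧ ∑' b : u, ENNReal.ofReal (ρ b ^ t) ≤ ν univ := by
  have hchoice : ∀ x, ∃ r ∈ Ioo 0 δ, x ∈ A → ENNReal.ofReal (r ^ t) ≤ ν (ball x r) := by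
    intro x
    by_cases hx : x ∈ A
    · obtain ⟨r, hr, hrmem⟩ := ((h x hx).and_eventually (Ioo_mem_nhdsGT hδ)).exists
      exact ⟨r, hrmem, fun _ => hr⟩
    · exact ⟨δ / 2, ⟨half_pos hδ, half_lt_self hδ⟩, fun hx' => absurd hx' hx⟩
  choose ρ hρ hρA using hchoice
  obtain ⟨u, huA, hdisj, hcov⟩ :=
    Vitali.exists_disjoint_subfamily_covering_enlargement_closedBall A id ρ δ
      (fun a _ => (hρ a).2.le) 4 (by norm_num)
  have hdisj' : Pairwise (Function.onFun Disjoint fun b : u => closedBall (b : X) (ρ b)) :=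
    fun i j hij => hdisj i.2 j.2 (Subtype.coe_ne_coe.2 hij)
  have hmass : ∀ b ∈ u, ENNReal.ofReal (ρ b ^ t) ≤ ν (closedBall b (ρ b)) := fun b hb =>
    (hρA b (huA hb)).trans (measure_mono ball_subset_closedBall)
  have hcount : u.Countable := by
    have := Measure.countable_meas_pos_of_disjoint_iUnion₀ (μ := ν)
      (fun _ => measurableSet_closedBall.nullMeasurableSet)
      (fun i j hij => (hdisj' hij).aedisjoint)
    have hpos : {b : u | 0 < ν (closedBall b (ρ b))} = univ := eq_univ_of_forall fun b =>
      (ENNReal.ofReal_pos.2 (Real.rpow_pos_of_pos (hρ b).1 t)).trans_le (hmass b b.2)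
    rw [hpos] at this
    exact countable_coe_iff.1 (countable_univ_iff.1 this)
  refine ⟨u, ρ, hcount, fun b _ => hρ b, fun a ha => ?_, ?_⟩
  · obtain ⟨b, hbu, hsub⟩ := hcov a ha
    exact mem_biUnion hbu (hsub (mem_closedBall_self (hρ a).1.le))
  · have := hcount.to_subtype
    calc ∑' b : u, ENNReal.ofReal (ρ b ^ t) ≤ ∑' b : u, ν (closedBall b (ρ b)) :=
          ENNReal.tsum_le_tsum fun b => hmass b b.2
      _ = ν (⋃ b : u, closedBall b (ρ b)) :=
          (measure_iUnion hdisj' fun _ => measurableSet_closedBall).symm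
      _ ≤ ν univ := measure_mono (subset_univ _)

theorem hausdorffMeasure_eq_zero_of_frequently_rpow_le_measure_ball [IsFiniteMeasure ν]
    {A : Set X} {t s : ℝ} (hs : 0 ≤ s) (hts : t < s)
    (h : ∀ x ∈ A, ∃ᶠ r in 𝓝[>] 0, ENNReal.ofReal (r ^ t) ≤ ν (ball x r)) :
    μH[s] A = 0 := by
  set δ : ℕ → ℝ := fun k => 1 / ((k : ℝ) + 1)
  have hδpos : ∀ k, 0 < δ k := fun k => Nat.one_div_pos_of_nat
  have hδ : Tendsto δ atTop (𝓝 0) := tendsto_one_div_add_atTop_nhds_zero_nat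
  choose u ρ hu hρ hcov hsum using fun k =>
    exists_countable_closedBall_cover_of_frequently_rpow_le_measure_ball ν (hδpos k) h
  have := fun k => (hu k).to_subtype
  have hbound : ∀ k, ∑' b : u k, ediam (closedBall (b : X) (4 * ρ k b)) ^ s ≤
      ENNReal.ofReal (8 ^ s * δ k ^ (s - t)) * ν univ := fun k =>
    calc ∑' b : u k, ediam (closedBall (b : X) (4 * ρ k b)) ^ s
        ≤ ∑' b : u k, ENNReal.ofReal (8 ^ s * δ k ^ (s - t)) * ENNReal.ofReal (ρ k b ^ t) :=
          ENNReal.tsum_le_tsum fun b => ediam_closedBall_rpow_le (hρ k b b.2) hs hts.le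
      _ ≤ ENNReal.ofReal (8 ^ s * δ k ^ (s - t)) * ν univ := by
          rw [ENNReal.tsum_mul_left]; gcongr; exact hsum k
  have hbound_tendsto : Tendsto (fun k => ENNReal.ofReal (8 ^ s * δ k ^ (s - t)) * ν univ)
      atTop (𝓝 0) := by
    have hpow : Tendsto (fun k => δ k ^ (s - t)) atTop (𝓝 0) := by
      have := (Real.continuousAt_rpow_const 0 (s - t) (Or.inr (sub_pos.2 hts).le)).tendsto.comp hδ
      rwa [Real.zero_rpow (sub_pos.2 hts).ne'] at this
    simpa using ENNReal.Tendsto.mul_const (ENNReal.tendsto_ofReal (hpow.const_mul (8 ^ s)))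
      (Or.inr (measure_ne_top ν univ))
  refine le_antisymm ?_ zero_le
  calc μH[s] A
        ≤ liminf (fun k => ∑' b : u k, ediam (closedBall (b : X) (4 * ρ k b)) ^ s) atTop :=
        Measure.hausdorffMeasure_le_liminf_tsum s A (fun k => ENNReal.ofReal (8 * δ k))
          (by simpa using ENNReal.tendsto_ofReal (hδ.const_mul 8))
          (fun k (b : u k) => closedBall (b : X) (4 * ρ k b))
          (Eventually.of_forall fun k b => (ediam_closedBall_le_ofReal _ _).trans
            (ENNReal.ofReal_le_ofReal (by linarith [(hρ k b b.2).2])))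
          (Eventually.of_forall fun k x hx => by
            obtain ⟨b, hb, hxb⟩ := mem_iUnion₂.1 (hcov k hx)
            exact mem_iUnion.2 ⟨⟨b, hb⟩, hxb⟩)
    _ ≤ liminf (fun k => ENNReal.ofReal (8 ^ s * δ k ^ (s - t)) * ν univ) atTop :=
        liminf_le_liminf (Eventually.of_forall hbound)
    _ = 0 := hbound_tendsto.liminf_eq

end MetricSpace

section LowerLocalDim

variable {n : ℕ} (ν : Measure (EuclideanSpace ℝ (Fin n))) [IsFiniteMeasure ν]

-- the function whose liminf at `0⁺` is `lowerLocalDim ν x`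
noncomputable def localDimRatio (x : EuclideanSpace ℝ (Fin n)) (r : ℝ) : ℝ≥0∞ :=
  if ν (ball x r) = 0 then ∞ else ENNReal.ofReal (Real.log (ν (ball x r)).toReal / Real.log r)

theorem coe_lt_localDimRatio_iff {x : EuclideanSpace ℝ (Fin n)} {r : ℝ} (hr : r ∈ Ioo 0 1)
    (c : ℝ≥0) :
    (c : ℝ≥0∞) < localDimRatio ν x r ↔ ν (ball x r) < ENNReal.ofReal (r ^ (c : ℝ)) := by
  have hrc : 0 < r ^ (c : ℝ) := Real.rpow_pos_of_pos hr.1 _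
  by_cases h0 : ν (ball x r) = 0
  · simp [localDimRatio, h0, hrc]
  have hm : 0 < (ν (ball x r)).toReal := ENNReal.toReal_pos h0 (measure_ne_top ν _)
  rw [localDimRatio, if_neg h0, ENNReal.lt_ofReal_iff_toReal_lt (measure_ne_top ν _),
    ← ENNReal.ofReal_coe_nnreal, ENNReal.ofReal_lt_ofReal_iff_of_nonneg c.coe_nonneg,
    lt_div_iff_of_neg (Real.log_neg hr.1 hr.2),
    ← Real.log_rpow hr.1, Real.log_lt_log_iff hm hrc]

theorem frequently_rpow_le_measure_ball_of_lowerLocalDim_lt {x : EuclideanSpace ℝ (Fin n)}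
    {t : ℝ≥0} (h : lowerLocalDim ν x < t) :
    ∃ᶠ r in 𝓝[>] 0, ENNReal.ofReal (r ^ (t : ℝ)) ≤ ν (ball x r) := by
  refine (frequently_lt_of_liminf_lt (by isBoundedDefault) h).mp ?_
  filter_upwards [Ioo_mem_nhdsGT one_pos] with r hr hlt
  exact not_lt.1 ((coe_lt_localDimRatio_iff ν hr t).not.1 hlt.not_gt)

theorem eventually_measure_ball_le_rpow_of_lt_lowerLocalDim {x : EuclideanSpace ℝ (Fin n)}
    {c : ℝ≥0} (h : c < lowerLocalDim ν x) :
    ∀ᶠ r in 𝓝[>] 0, ν (ball x r) ≤ ENNReal.ofReal (r ^ (c : ℝ)) := by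
  filter_upwards [eventually_lt_of_lt_liminf h, Ioo_mem_nhdsGT one_pos] with r hlt hr
  exact ((coe_lt_localDimRatio_iff ν hr c).1 hlt).le

theorem iInf_dimH_le_essInf_lowerLocalDim :
    (⨅ (E : Set (EuclideanSpace ℝ (Fin n))) (_ : MeasurableSet E) (_ : 0 < ν E), dimH E) ≤
      essInf (lowerLocalDim ν) ν := by
  refine le_of_forall_gt_imp_ge_of_dense fun c hc => ?_
  obtain ⟨t, ht, htc⟩ := ENNReal.lt_iff_exists_nnreal_btwn.1 hc
  obtain ⟨s, hts, hsc⟩ := ENNReal.lt_iff_exists_nnreal_btwn.1 htc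
  set A := {x | lowerLocalDim ν x < t}
  have hA : 0 < ν A := pos_iff_ne_zero.2 fun h0 =>
    ht.not_ge (by rw [essInf_eq_sSup]; exact le_sSup h0)
  have hH : μH[s] A = 0 :=
    hausdorffMeasure_eq_zero_of_frequently_rpow_le_measure_ball ν s.coe_nonneg
      (by exact_mod_cast hts) fun _ hx => frequently_rpow_le_measure_ball_of_lowerLocalDim_lt ν hx
  have hdim : dimH (toMeasurable μH[s] A) ≤ s := dimH_le_of_hausdorffMeasure_ne_top <| by
    rw [measure_toMeasurable, hH]; exact ENNReal.zero_ne_top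
  calc _ ≤ dimH (toMeasurable μH[s] A) :=
        iInf₂_le_of_le _ (measurableSet_toMeasurable _ _)
          (iInf_le _ (hA.trans_le (measure_mono (subset_toMeasurable _ _))))
    _ ≤ c := hdim.trans hsc.le

theorem essInf_lowerLocalDim_le_dimH {E : Set (EuclideanSpace ℝ (Fin n))} (hE : 0 < ν E) :
    essInf (lowerLocalDim ν) ν ≤ dimH E := by
  refine ENNReal.le_of_forall_nnreal_lt fun c hc => ?_
  set G : ℕ → Set (EuclideanSpace ℝ (Fin n)) := fun k =>
    {x | ∀ r ∈ Ioo 0 (1 / ((k : ℝ) + 1)), ν (ball x r) ≤ ENNReal.ofReal (r ^ (c : ℝ))}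
  have hG : ∀ᵐ x ∂ν, x ∈ ⋃ k, G k := by
    filter_upwards [ae_lt_of_lt_essInf hc] with x hx
    obtain ⟨ε, hε, hsub⟩ := mem_nhdsGT_iff_exists_Ioo_subset.1
      (eventually_measure_ball_le_rpow_of_lt_lowerLocalDim ν hx)
    obtain ⟨k, hk⟩ := exists_nat_one_div_lt (mem_Ioi.1 hε)
    exact mem_iUnion.2 ⟨k, fun r hr => hsub ⟨hr.1, hr.2.trans hk⟩⟩
  obtain ⟨k, hk⟩ : ∃ k, 0 < ν (E ∩ G k) := by
    refine exists_measure_pos_of_not_measure_iUnion_null ?_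
    rw [← inter_iUnion, measure_inter_conull (t := ⋃ k, G k) (mem_ae_iff.1 hG)]
    exact hE.ne'
  have hH : μH[c] (E ∩ G k) ≠ 0 :=
    (hk.trans_le (measure_le_hausdorffMeasure_of_measure_ball_le ν c.coe_nonneg
      Nat.one_div_pos_of_nat fun x hx => hx.2)).ne'
  exact (le_dimH_of_hausdorffMeasure_ne_zero hH).trans (dimH_mono inter_subset_left)

end LowerLocalDim

theorem stmt_2 (n : ℕ) (ν : Measure (EuclideanSpace ℝ (Fin n)))
    [IsProbabilityMeasure ν] :
    (⨅ (E : Set (EuclideanSpace ℝ (Fin n))) (_ : MeasurableSet E) (_ : 0 < ν E), dimH E)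
      = essInf (lowerLocalDim ν) ν :=
  le_antisymm (iInf_dimH_le_essInf_lowerLocalDim ν)
    (le_iInf₂ fun _ _ => le_iInf fun hE => essInf_lowerLocalDim_le_dimH ν hE)
end

section
/- Let ν be a Borel probability measure on ℝ^n and α ≥ 0. Then the following are equivalent: (i) inf{dim_H(E) : E Borel, ν(E) > 0} = inf{dim_H(E) : E Borel, ν(E) = 1} = α; (ii) there exists a Borel set E ⊆ ℝ^n with dim_H(E) = α and ν(E) = 1, and moreover ν(E) = 0 for every Borel set E with dim_H(E) < α. -/
open MeasureTheory Metric Set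
open scoped NNReal ENNReal

/-! The dimension of full-measure sets is attained: a minimizing sequence of such sets has a
full-measure intersection, whose dimension is at most that of each term by monotonicity. The rest
is the observation that `α ≤ dimH E` for every `E` of positive measure says precisely that sets of
dimension below `α` are null, while full-measure sets have positive measure. -/

namespace MeasureTheory

variable {X : Type*} [MeasurableSpace X] (μ : Measure X) (f : Set X → ℝ≥0∞)

theorem measure_iInter_eq_one [IsProbabilityMeasure μ] {ι : Type*} [Countable ι]
    {s : ι → Set X} (hs : ∀ i, MeasurableSet (s i)) (h : ∀ i, μ (s i) = 1) :
    μ (⋂ i, s i) = 1 := by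
  have hae : ∀ i, ∀ᵐ x ∂μ, x ∈ s i := fun i => by
    rw [ae_mem_iff_measure_eq (hs i).nullMeasurableSet, h i, measure_univ]
  rw [← measure_univ (μ := μ), ← ae_mem_iff_measure_eq (MeasurableSet.iInter hs).nullMeasurableSet]
  simpa only [mem_iInter] using ae_all_iff.2 hae

theorem iInf_measure_pos_le_iInf_measure_eq_one :
    ⨅ (E : Set X) (_ : MeasurableSet E) (_ : 0 < μ E), f E
      ≤ ⨅ (E : Set X) (_ : MeasurableSet E) (_ : μ E = 1), f E :=
  iInf₂_mono fun E _ => iInf_mono' fun h => ⟨by simp [h], le_rfl⟩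

theorem le_iInf_measure_pos_iff {a : ℝ≥0∞} :
    a ≤ ⨅ (E : Set X) (_ : MeasurableSet E) (_ : 0 < μ E), f E ↔
      ∀ E, MeasurableSet E → f E < a → μ E = 0 := by
  simp only [le_iInf_iff, pos_iff_ne_zero]
  exact forall₂_congr fun E _ => by rw [not_imp_comm, not_le]

theorem _root_.Monotone.exists_measure_eq_one_eq_iInf [IsProbabilityMeasure μ] (hf : Monotone f) :
    ∃ E, MeasurableSet E ∧ μ E = 1 ∧
      f E = ⨅ (E : Set X) (_ : MeasurableSet E) (_ : μ E = 1), f E := by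
  set S := f '' {E | MeasurableSet E ∧ μ E = 1}
  obtain ⟨u, -, hu, huS⟩ := exists_seq_tendsto_sInf (S := S)
    ⟨_, mem_image_of_mem f ⟨MeasurableSet.univ, measure_univ⟩⟩ (OrderBot.bddBelow S)
  choose s hs hfs using huS
  have hmeas : MeasurableSet (⋂ k, s k) := .iInter fun k => (hs k).1
  have hone : μ (⋂ k, s k) = 1 := measure_iInter_eq_one μ (fun k => (hs k).1) fun k => (hs k).2
  have hS : sInf S = ⨅ (E : Set X) (_ : MeasurableSet E) (_ : μ E = 1), f E := by
    simp only [S, sInf_image, mem_ofPred_eq, iInf_and]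
  refine ⟨⋂ k, s k, hmeas, hone, le_antisymm ?_ (iInf₂_le_of_le _ hmeas (iInf_le _ hone))⟩
  rw [← hS]
  exact ge_of_tendsto' hu fun k => hfs k ▸ hf (iInter_subset s k)

end MeasureTheory

theorem stmt_6 (n : ℕ) (ν : Measure (EuclideanSpace ℝ (Fin n)))
    [IsProbabilityMeasure ν] (α : ℝ≥0) :
    ((⨅ (E : Set (EuclideanSpace ℝ (Fin n))) (_ : MeasurableSet E) (_ : 0 < ν E), dimH E)
          = (α : ℝ≥0∞)
        ∧ (⨅ (E : Set (EuclideanSpace ℝ (Fin n))) (_ : MeasurableSet E) (_ : ν E = 1), dimH E)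
          = (α : ℝ≥0∞))
      ↔ ((∃ E : Set (EuclideanSpace ℝ (Fin n)),
            MeasurableSet E ∧ dimH E = (α : ℝ≥0∞) ∧ ν E = 1)
        ∧ (∀ E : Set (EuclideanSpace ℝ (Fin n)),
            MeasurableSet E → dimH E < (α : ℝ≥0∞) → ν E = 0)) := by
  constructor
  · rintro ⟨hpos, hone⟩
    obtain ⟨E, hEm, hE1, hEd⟩ :=
      Monotone.exists_measure_eq_one_eq_iInf ν dimH fun _ _ => dimH_mono
    exact ⟨⟨E, hEm, hEd.trans hone, hE1⟩, (le_iInf_measure_pos_iff ν dimH).1 hpos.ge⟩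
  · rintro ⟨⟨E₀, hE₀m, hE₀d, hE₀1⟩, hnull⟩
    have hle : (α : ℝ≥0∞) ≤ ⨅ (E : Set _) (_ : MeasurableSet E) (_ : 0 < ν E), dimH E :=
      (le_iInf_measure_pos_iff ν dimH).2 hnull
    have hge : ⨅ (E : Set _) (_ : MeasurableSet E) (_ : ν E = 1), dimH E ≤ (α : ℝ≥0∞) :=
      hE₀d ▸ iInf₂_le_of_le E₀ hE₀m (iInf_le _ hE₀1)
    have hmid := iInf_measure_pos_le_iInf_measure_eq_one ν dimH
    exact ⟨le_antisymm (hmid.trans hge) hle, le_antisymm hge (hle.trans hmid)⟩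
end

section
/- Let ν be a Borel probability measure on ℝ^n and α ≥ 0. Then the following are equivalent: (i) there exists a Borel set E ⊆ ℝ^n with dim_H(E) = α and ν(E) = 1, and ν(E) = 0 for every Borel set E with dim_H(E) < α; (ii) for every ε > 0, ν is absolutely continuous with respect to ℋ^{α−ε} and ν is mutually singular with ℋ^{α+ε}, where ℋ^t is the t-dimensional Hausdorff measure on ℝ^n (with ℋ^{α−ε} read as ℋ^0 when ε > α). -/
open MeasureTheory Set
open scoped NNReal ENNReal

/-! A set of dimension `< d` is `μH[d]`-null and a `μH[d]`-null set has dimension `≤ d`,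
so charging no set of dimension `< α` is the same as `ν ≪ μH[d]` for all `d < α`. If moreover
`ν ⟂ₘ μH[d]` for all `d > α`, then `ν` lives on the intersection of `μH[dₖ]`-conull sets along
`dₖ ↓ α`, a set of dimension `≤ α`, and absolute continuity below `α` pushes its dimension up
to `α`. The truncation `α - ε = 0` is harmless: `μH[0]` vanishes only on `∅`. -/

namespace MeasureTheory.Measure

variable {X : Type*} [EMetricSpace X] [MeasurableSpace X] [BorelSpace X] {ν : Measure X}

theorem absolutelyContinuous_hausdorffMeasure_zero (ν : Measure X) : ν ≪ μH[0] := by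
  intro s hs
  have : s = ∅ := by
    by_contra hne
    have := one_le_hausdorffMeasure_zero_of_nonempty (nonempty_iff_ne_empty.mpr hne)
    simp [hs] at this
  simp [this]

theorem le_dimH_of_forall_absolutelyContinuous {α : ℝ≥0} (hac : ∀ d : ℝ≥0, d < α → ν ≪ μH[d])
    {s : Set X} (hs : ν s ≠ 0) : (α : ℝ≥0∞) ≤ dimH s := by
  refine le_of_forall_lt fun c hc => ?_
  obtain ⟨d, hcd, hdα⟩ := ENNReal.lt_iff_exists_nnreal_btwn.mp hc
  have hμH : μH[d] s ≠ 0 := fun h0 => hs (hac d (by exact_mod_cast hdα) h0)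
  exact hcd.trans_le (le_dimH_of_hausdorffMeasure_ne_zero hμH)

theorem forall_measure_eq_zero_of_dimH_lt_iff {α : ℝ≥0} :
    (∀ s, MeasurableSet s → dimH s < α → ν s = 0) ↔ ∀ d : ℝ≥0, d < α → ν ≪ μH[d] := by
  constructor
  · intro hnull d hd s hs
    have hdim : dimH (toMeasurable μH[d] s) ≤ d :=
      dimH_le_of_hausdorffMeasure_ne_top (by simp [measure_toMeasurable, hs])
    exact measure_mono_null (subset_toMeasurable _ _)
      (hnull _ (measurableSet_toMeasurable _ _) (hdim.trans_lt (by exact_mod_cast hd)))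
  · intro hac s _ hs
    by_contra h
    exact (le_dimH_of_forall_absolutelyContinuous hac h).not_gt hs

theorem mutuallySingular_hausdorffMeasure_of_dimH_lt {s : Set X} (hs : MeasurableSet s)
    (hν : ν sᶜ = 0) {d : ℝ≥0} (hd : dimH s < d) : ν ⟂ₘ μH[d] :=
  ⟨sᶜ, hs.compl, hν, by rw [compl_compl]; exact hausdorffMeasure_of_dimH_lt hd⟩

theorem MutuallySingular.exists_dimH_le {d : ℝ≥0} (h : ν ⟂ₘ μH[d]) :
    ∃ s, MeasurableSet s ∧ ν sᶜ = 0 ∧ dimH s ≤ d :=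
  ⟨h.nullSetᶜ, h.measurableSet_nullSet.compl, by rw [compl_compl]; exact h.measure_nullSet,
    dimH_le_of_hausdorffMeasure_ne_top (by simp [h.measure_compl_nullSet])⟩

theorem exists_dimH_le_of_forall_mutuallySingular {α : ℝ≥0}
    (hsing : ∀ d : ℝ≥0, α < d → ν ⟂ₘ μH[d]) :
    ∃ s, MeasurableSet s ∧ ν sᶜ = 0 ∧ dimH s ≤ α := by
  obtain ⟨u, -, hαu, hu⟩ := exists_seq_strictAnti_tendsto α
  choose s hsm hνs hdim using fun k => (hsing (u k) (hαu k)).exists_dimH_le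
  refine ⟨⋂ k, s k, .iInter hsm, ?_, ?_⟩
  · rw [compl_iInter]
    exact measure_iUnion_null hνs
  · refine ge_of_tendsto' (ENNReal.tendsto_coe.mpr hu) fun k => ?_
    exact (dimH_mono (iInter_subset s k)).trans (hdim k)

theorem forall_pos_absolutelyContinuous_and_mutuallySingular_iff (ν : Measure X) (α : ℝ≥0) :
    (∀ ε : ℝ≥0, 0 < ε → ν ≪ μH[(α - ε : ℝ≥0)] ∧ ν ⟂ₘ μH[(α + ε : ℝ≥0)]) ↔
      (∀ d : ℝ≥0, d < α → ν ≪ μH[d]) ∧ ∀ d : ℝ≥0, α < d → ν ⟂ₘ μH[d] := by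
  constructor
  · intro h
    refine ⟨fun d hd => ?_, fun d hd => ?_⟩
    · simpa [tsub_tsub_cancel_of_le hd.le] using (h (α - d) (tsub_pos_of_lt hd)).1
    · simpa [add_tsub_cancel_of_le hd.le] using (h (d - α) (tsub_pos_of_lt hd)).2
  · rintro ⟨hac, hsing⟩ ε hε
    refine ⟨?_, hsing _ (lt_add_of_pos_right α hε)⟩
    rcases eq_zero_or_pos α with rfl | hα
    · simpa using absolutelyContinuous_hausdorffMeasure_zero ν
    · exact hac _ (tsub_lt_self hα hε)

end MeasureTheory.Measure

theorem stmt_7 (n : ℕ) (ν : Measure (EuclideanSpace ℝ (Fin n)))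
    [IsProbabilityMeasure ν] (α : ℝ≥0) :
    ((∃ E : Set (EuclideanSpace ℝ (Fin n)),
          MeasurableSet E ∧ dimH E = (α : ℝ≥0∞) ∧ ν E = 1)
        ∧ (∀ E : Set (EuclideanSpace ℝ (Fin n)),
          MeasurableSet E → dimH E < (α : ℝ≥0∞) → ν E = 0))
      ↔ (∀ ε : ℝ≥0, 0 < ε →
          ν ≪ Measure.hausdorffMeasure ((α - ε : ℝ≥0) : ℝ)
            ∧ ν ⟂ₘ Measure.hausdorffMeasure ((α + ε : ℝ≥0) : ℝ)) := by
  rw [Measure.forall_pos_absolutelyContinuous_and_mutuallySingular_iff,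
    Measure.forall_measure_eq_zero_of_dimH_lt_iff]
  constructor
  · rintro ⟨⟨E, hEm, hdim, hE⟩, hac⟩
    refine ⟨hac, fun d hd => Measure.mutuallySingular_hausdorffMeasure_of_dimH_lt hEm ?_ ?_⟩
    · exact (prob_compl_eq_zero_iff hEm).mpr hE
    · exact hdim.trans_lt (by exact_mod_cast hd)
  · rintro ⟨hac, hsing⟩
    obtain ⟨E, hEm, hνE, hdim⟩ := Measure.exists_dimH_le_of_forall_mutuallySingular hsing
    have hE : ν E = 1 := (prob_compl_eq_zero_iff hEm).mp hνE
    refine ⟨⟨E, hEm, le_antisymm hdim ?_, hE⟩, hac⟩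
    exact Measure.le_dimH_of_forall_absolutelyContinuous hac (by simp [hE])
end

section
/- Let ν be a compactly supported Borel probability measure on ℝ^n, K > 0, and T : ℝ^n → ℝ^n a K-Lipschitz map with T(supp ν) ⊆ supp ν. Suppose ν is T-invariant (the pushforward of ν under T equals ν) and ergodic with respect to T. Then there exist constants c and c' such that for ν-almost every x, liminf_{r→0⁺} log ν(B(x,r))/log r = c and limsup_{r→0⁺} log ν(B(x,r))/log r = c'. -/
/-!
If `T` is `K`-Lipschitz and preserves `ν`, then `B(x, r) ⊆ T⁻¹ B(T x, K r)`, so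
`ν(B(x, r)) ≤ ν(B(T x, K r))`; since `log (K r) / log r → 1`, both local dimensions can only
decrease along `T`. A measurable function that decreases along a measure-preserving map is
a.e. invariant, hence a.e. constant by ergodicity. The local dimensions are measurable because
`r ↦ ν(B(x, r))` is left-continuous, so the liminf and limsup may be taken over rational radii.
-/

open MeasureTheory Metric Set Filter
open scoped NNReal ENNReal Topology

/-- The (topological) support of a measure: the set of points all of whose
open neighbourhoods have positive measure. -/
def measureSupport {n : ℕ} (ν : Measure (EuclideanSpace ℝ (Fin n))) :
    Set (EuclideanSpace ℝ (Fin n)) :=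
  {x | ∀ U : Set (EuclideanSpace ℝ (Fin n)), IsOpen U → x ∈ U → 0 < ν U}

/-- The upper local dimension of a measure `ν` at a point `x`:
`limsup_{r → 0⁺} log ν(B(x,r)) / log r`. -/
noncomputable def upperLocalDim {n : ℕ} (ν : Measure (EuclideanSpace ℝ (Fin n)))
    (x : EuclideanSpace ℝ (Fin n)) : ℝ≥0∞ :=
  Filter.limsup
    (fun r : ℝ => if ν (ball x r) = 0 then ∞
      else ENNReal.ofReal (Real.log (ν (ball x r)).toReal / Real.log r))
    (𝓝[>] (0 : ℝ))

noncomputable def logRatio (m : ℝ≥0∞) (r : ℝ) : ℝ≥0∞ :=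
  if m = 0 then ∞ else ENNReal.ofReal (Real.log m.toReal / Real.log r)

lemma logRatio_le_logRatio_of_le {m m' : ℝ≥0∞} {r : ℝ} (hr : r ∈ Ioo 0 1) (hm : m ≤ m')
    (hm' : m' ≠ ∞) : logRatio m' r ≤ logRatio m r := by
  rcases eq_or_ne m 0 with rfl | hm0
  · simp [logRatio]
  have hm'0 : m' ≠ 0 := ((pos_iff_ne_zero.2 hm0).trans_le hm).ne'
  simp only [logRatio, if_neg hm0, if_neg hm'0]
  refine ENNReal.ofReal_le_ofReal (div_le_div_of_nonpos_of_le (Real.log_neg hr.1 hr.2).le ?_)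
  exact Real.log_le_log (ENNReal.toReal_pos hm0 (ne_top_of_le_ne_top hm' hm))
    (ENNReal.toReal_mono hm' hm)

lemma logRatio_eq_mul {m : ℝ≥0∞} {r s : ℝ} (hr : r ∈ Ioo 0 1) (hs : s ∈ Ioo 0 1) :
    logRatio m s = ENNReal.ofReal (Real.log r / Real.log s) * logRatio m r := by
  have hlogr := Real.log_neg hr.1 hr.2
  have hratio : 0 < Real.log r / Real.log s :=
    div_pos_of_neg_of_neg hlogr (Real.log_neg hs.1 hs.2)
  rcases eq_or_ne m 0 with rfl | hm0
  · simp [logRatio, hratio]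
  simp only [logRatio, if_neg hm0]
  rw [← ENNReal.ofReal_mul hratio.le, div_mul_div_comm, mul_comm, mul_div_mul_right _ _ hlogr.ne]

lemma tendsto_log_div_log_const_mul {c : ℝ} (hc : 0 < c) :
    Tendsto (fun r => Real.log r / Real.log (c * r)) (𝓝[>] 0) (𝓝 1) := by
  have h : Tendsto (fun r => (1 + Real.log c / Real.log r)⁻¹) (𝓝[>] 0) (𝓝 1) := by
    simpa using ((tendsto_const_nhds.div_atBot Real.tendsto_log_nhdsGT_zero).const_add 1).inv₀
      (by norm_num)
  refine h.congr' ?_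
  filter_upwards [Ioo_mem_nhdsGT one_pos] with r hr
  rw [Real.log_mul hc.ne' hr.1.ne', add_comm (Real.log c),
    add_div' _ _ _ (Real.log_neg hr.1 hr.2).ne, one_mul, inv_div]

lemma map_mul_left_nhdsGT_zero {c : ℝ} (hc : 0 < c) : map (c * ·) (𝓝[>] 0) = 𝓝[>] 0 := by
  conv_lhs => rw [← comap_mulLeft_nhdsGT_zero hc]
  exact map_comap_of_surjective (mul_left_surjective₀ hc.ne') _

lemma iInf_Ioo_eq_iInf_ratCast {α : Type*} [CompleteLinearOrder α] [TopologicalSpace α]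
    [ClosedIciTopology α] {f : ℝ → α} {a b : ℝ}
    (hf : ∀ r ∈ Ioo a b, ContinuousWithinAt f (Iio r) r) :
    ⨅ r ∈ Ioo a b, f r = ⨅ (q : ℚ) (_ : (q : ℝ) ∈ Ioo a b), f q := by
  refine le_antisymm (le_iInf₂ fun q hq => iInf₂_le (q : ℝ) hq) (le_iInf₂ fun r hr => ?_)
  set s := Ioo a r ∩ range ((↑) : ℚ → ℝ)
  have hrs : r ∈ closure s := by
    refine closure_minimal (Rat.denseRange_cast.open_subset_closure_inter isOpen_Ioo)
      isClosed_closure ?_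
    rw [closure_Ioo hr.1.ne]
    exact right_mem_Icc.2 hr.1.le
  refine closure_minimal ?_ isClosed_Ici (((hf r hr).mono fun _ h => h.1.2).mem_closure_image hrs)
  rintro _ ⟨_, ⟨hqr, q, rfl⟩, rfl⟩
  exact iInf₂_le q ⟨hqr.1, hqr.2.trans hr.2⟩

lemma iSup_Ioo_eq_iSup_ratCast {α : Type*} [CompleteLinearOrder α] [TopologicalSpace α]
    [ClosedIicTopology α] {f : ℝ → α} {a b : ℝ}
    (hf : ∀ r ∈ Ioo a b, ContinuousWithinAt f (Iio r) r) :
    ⨆ r ∈ Ioo a b, f r = ⨆ (q : ℚ) (_ : (q : ℝ) ∈ Ioo a b), f q :=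
  iInf_Ioo_eq_iInf_ratCast (α := αᵒᵈ) hf

lemma measurable_logRatio (r : ℝ) : Measurable fun m => logRatio m r :=
  Measurable.ite (measurableSet_singleton 0) measurable_const
    (ENNReal.measurable_ofReal.comp
      ((Real.measurable_log.comp ENNReal.measurable_toReal).div_const _))

lemma hasBasis_nhdsGT_zero_one_div_succ :
    (𝓝[>] (0 : ℝ)).HasBasis (fun _ : ℕ => True) fun k => Ioo 0 (1 / (k + 1)) :=
  (nhdsGT_basis 0).to_hasBasis (fun _ hε => (exists_nat_one_div_lt hε).imp fun _ hk =>
    ⟨trivial, Ioo_subset_Ioo_right hk.le⟩) fun _ _ => ⟨_, Nat.one_div_pos_of_nat, subset_rfl⟩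

section Measurability

variable {α : Type*} [MeasurableSpace α] {F : α → ℝ → ℝ≥0∞}

lemma measurable_liminf_nhdsGT_zero (hF : ∀ r, Measurable fun x => F x r)
    (hcont : ∀ x, ∀ r ∈ Ioo (0 : ℝ) 1, ContinuousWithinAt (F x) (Iio r) r) :
    Measurable fun x => liminf (F x) (𝓝[>] 0) := by
  have h : ∀ x, liminf (F x) (𝓝[>] 0) =
      ⨆ k : ℕ, ⨅ (q : ℚ) (_ : (q : ℝ) ∈ Ioo 0 (1 / ((k : ℝ) + 1))), F x q := fun x => by
    simp only [hasBasis_nhdsGT_zero_one_div_succ.liminf_eq_iSup_iInf, iSup_true]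
    exact iSup_congr fun k => iInf_Ioo_eq_iInf_ratCast
      fun r hr => hcont x r ⟨hr.1, hr.2.trans_le (div_le_one_of_le₀ (by simp) (by positivity))⟩
  simp_rw [h]
  exact .iSup fun _ => .iInf fun q => .iInf fun _ => hF q

lemma measurable_limsup_nhdsGT_zero (hF : ∀ r, Measurable fun x => F x r)
    (hcont : ∀ x, ∀ r ∈ Ioo (0 : ℝ) 1, ContinuousWithinAt (F x) (Iio r) r) :
    Measurable fun x => limsup (F x) (𝓝[>] 0) := by
  have h : ∀ x, limsup (F x) (𝓝[>] 0) =
      ⨅ k : ℕ, ⨆ (q : ℚ) (_ : (q : ℝ) ∈ Ioo 0 (1 / ((k : ℝ) + 1))), F x q := fun x => by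
    simp only [hasBasis_nhdsGT_zero_one_div_succ.limsup_eq_iInf_iSup, iInf_true]
    exact iInf_congr fun k => iSup_Ioo_eq_iSup_ratCast
      fun r hr => hcont x r ⟨hr.1, hr.2.trans_le (div_le_one_of_le₀ (by simp) (by positivity))⟩
  simp_rw [h]
  exact .iInf fun _ => .iSup fun q => .iSup fun _ => hF q

end Measurability

section MeasureBall

variable {X : Type*} [PseudoMetricSpace X] [MeasurableSpace X] (μ : Measure X)

lemma tendsto_measure_ball_nhdsLT (x : X) (r : ℝ) :
    Tendsto (fun s => μ (ball x s)) (𝓝[<] r) (𝓝 (μ (ball x r))) := by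
  have hmono : Monotone fun s => ball x s := fun _ _ h => ball_subset_ball h
  have hμmono : Monotone fun s => μ (ball x s) := fun _ _ h => measure_mono (hmono h)
  convert hμmono.tendsto_nhdsLT r
  have hunion : ball x r = ⋃ s : Iio r, ball x s := by
    ext y
    simp only [mem_ball, mem_iUnion, Subtype.exists, mem_Iio, exists_prop]
    exact ⟨fun h => (exists_between h).imp fun _ hs => ⟨hs.2, hs.1⟩, fun ⟨_, hs, h⟩ => h.trans hs⟩
  rw [sSup_image', hunion, Monotone.measure_iUnion]
  exact fun _ _ h => hmono h

lemma continuousWithinAt_logRatio_measure_ball [IsFiniteMeasure μ] (x : X) {r : ℝ}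
    (hr : r ∈ Ioo 0 1) : ContinuousWithinAt (fun s => logRatio (μ (ball x s)) s) (Iio r) r := by
  rcases eq_or_ne (μ (ball x r)) 0 with h0 | h0
  · refine tendsto_const_nhds.congr' ?_
    filter_upwards [self_mem_nhdsWithin] with s hs
    simp [logRatio, h0, measure_mono_null (ball_subset_ball (le_of_lt hs)) h0]
  have hlim := tendsto_measure_ball_nhdsLT μ x r
  have hlog : Tendsto (fun s => Real.log (μ (ball x s)).toReal / Real.log s) (𝓝[<] r)
      (𝓝 (Real.log (μ (ball x r)).toReal / Real.log r)) :=
    .div ((Real.continuousAt_log (ENNReal.toReal_pos h0 (measure_ne_top _ _)).ne').tendsto.comp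
        ((ENNReal.tendsto_toReal (measure_ne_top _ _)).comp hlim))
      ((Real.continuousAt_log hr.1.ne').tendsto.mono_left nhdsWithin_le_nhds)
      (Real.log_neg hr.1 hr.2).ne
  refine ((ENNReal.tendsto_ofReal hlog).congr' ?_).trans_eq (by simp [logRatio, h0])
  filter_upwards [hlim.eventually_ne h0] with s hs
  simp [logRatio, hs]

lemma measurable_measure_ball [SecondCountableTopology X] [OpensMeasurableSpace X] [SFinite μ]
    (r : ℝ) : Measurable fun x => μ (ball x r) :=
  measurable_measure_prodMk_left
    (isOpen_lt (continuous_snd.dist continuous_fst) continuous_const).measurableSet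

end MeasureBall

lemma LipschitzWith.measure_ball_le {X : Type*} [PseudoMetricSpace X] [MeasurableSpace X]
    [OpensMeasurableSpace X] {μ : Measure X} {K : ℝ≥0} {T : X → X}
    (hT : LipschitzWith K T) (hK : K ≠ 0) (hμ : MeasurePreserving T μ μ) (x : X) (r : ℝ) :
    μ (ball x r) ≤ μ (ball (T x) (K * r)) :=
  calc μ (ball x r) ≤ μ (T ⁻¹' ball (T x) (K * r)) := measure_mono (hT.mapsTo_ball hK x r)
    _ = μ (ball (T x) (K * r)) := hμ.measure_preimage measurableSet_ball.nullMeasurableSet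

section LocalDim

variable {n : ℕ} (ν : Measure (EuclideanSpace ℝ (Fin n)))

lemma lowerLocalDim_eq_liminf_logRatio (x : EuclideanSpace ℝ (Fin n)) :
    lowerLocalDim ν x = liminf (fun r => logRatio (ν (ball x r)) r) (𝓝[>] 0) := rfl

lemma upperLocalDim_eq_limsup_logRatio (x : EuclideanSpace ℝ (Fin n)) :
    upperLocalDim ν x = limsup (fun r => logRatio (ν (ball x r)) r) (𝓝[>] 0) := rfl

variable [IsFiniteMeasure ν]

lemma measurable_lowerLocalDim : Measurable (lowerLocalDim ν) :=
  measurable_liminf_nhdsGT_zero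
    (fun r => (measurable_logRatio r).comp (measurable_measure_ball ν r))
    fun x _ hr => continuousWithinAt_logRatio_measure_ball ν x hr

lemma measurable_upperLocalDim : Measurable (upperLocalDim ν) :=
  measurable_limsup_nhdsGT_zero
    (fun r => (measurable_logRatio r).comp (measurable_measure_ball ν r))
    fun x _ hr => continuousWithinAt_logRatio_measure_ball ν x hr

lemma logRatio_measure_ball_mul_le {x y : EuclideanSpace ℝ (Fin n)} {c : ℝ} (hc : 0 < c)
    (h : ∀ᶠ r in 𝓝[>] 0, ν (ball x r) ≤ ν (ball y (c * r))) :
    ∀ᶠ r in 𝓝[>] 0, logRatio (ν (ball y (c * r))) (c * r) ≤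
      ENNReal.ofReal (Real.log r / Real.log (c * r)) * logRatio (ν (ball x r)) r := by
  filter_upwards [h, Ioo_mem_nhdsGT one_pos, eventually_nhdsGT_zero_mul_left hc
    (Ioo_mem_nhdsGT one_pos)] with r hle hr hcr
  rw [← logRatio_eq_mul hr hcr]
  exact logRatio_le_logRatio_of_le hcr hle (measure_ne_top _ _)

lemma lowerLocalDim_le_of_measure_ball_le {x y : EuclideanSpace ℝ (Fin n)} {c : ℝ} (hc : 0 < c)
    (h : ∀ᶠ r in 𝓝[>] 0, ν (ball x r) ≤ ν (ball y (c * r))) :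
    lowerLocalDim ν y ≤ lowerLocalDim ν x := by
  have hρ := ENNReal.tendsto_ofReal (tendsto_log_div_log_const_mul hc)
  rw [ENNReal.ofReal_one] at hρ
  calc lowerLocalDim ν y
      = liminf (fun r => logRatio (ν (ball y (c * r))) (c * r)) (𝓝[>] 0) := by
        conv_lhs => rw [lowerLocalDim_eq_liminf_logRatio, ← map_mul_left_nhdsGT_zero hc]
        rfl
    _ ≤ liminf ((fun r => ENNReal.ofReal (Real.log r / Real.log (c * r))) *
          fun r => logRatio (ν (ball x r)) r) (𝓝[>] 0) :=
        liminf_le_liminf (logRatio_measure_ball_mul_le ν hc h)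
    _ ≤ 1 * lowerLocalDim ν x := by
        rw [← hρ.limsup_eq]
        exact ENNReal.liminf_mul_le (by simp [hρ.limsup_eq]) (by simp [hρ.limsup_eq])
    _ = lowerLocalDim ν x := one_mul _

lemma upperLocalDim_le_of_measure_ball_le {x y : EuclideanSpace ℝ (Fin n)} {c : ℝ} (hc : 0 < c)
    (h : ∀ᶠ r in 𝓝[>] 0, ν (ball x r) ≤ ν (ball y (c * r))) :
    upperLocalDim ν y ≤ upperLocalDim ν x := by
  have hρ := ENNReal.tendsto_ofReal (tendsto_log_div_log_const_mul hc)
  rw [ENNReal.ofReal_one] at hρ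
  calc upperLocalDim ν y
      = limsup (fun r => logRatio (ν (ball y (c * r))) (c * r)) (𝓝[>] 0) := by
        conv_lhs => rw [upperLocalDim_eq_limsup_logRatio, ← map_mul_left_nhdsGT_zero hc]
        rfl
    _ ≤ limsup ((fun r => ENNReal.ofReal (Real.log r / Real.log (c * r))) *
          fun r => logRatio (ν (ball x r)) r) (𝓝[>] 0) :=
        limsup_le_limsup (logRatio_measure_ball_mul_le ν hc h)
    _ ≤ 1 * upperLocalDim ν x := by
        rw [← hρ.limsup_eq]
        exact ENNReal.limsup_mul_le' (by simp [hρ.limsup_eq]) (by simp [hρ.limsup_eq])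
    _ = upperLocalDim ν x := one_mul _

lemma lowerLocalDim_apply_le {K : ℝ≥0} {T : EuclideanSpace ℝ (Fin n) → EuclideanSpace ℝ (Fin n)}
    (hT : LipschitzWith K T) (hν : MeasurePreserving T ν ν) (x : EuclideanSpace ℝ (Fin n)) :
    lowerLocalDim ν (T x) ≤ lowerLocalDim ν x :=
  -- `K + 1` rather than `K`, which may vanish
  lowerLocalDim_le_of_measure_ball_le ν (by positivity) (.of_forall
    ((hT.weaken (le_self_add : K ≤ K + 1)).measure_ball_le (by positivity) hν x))

lemma upperLocalDim_apply_le {K : ℝ≥0} {T : EuclideanSpace ℝ (Fin n) → EuclideanSpace ℝ (Fin n)}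
    (hT : LipschitzWith K T) (hν : MeasurePreserving T ν ν) (x : EuclideanSpace ℝ (Fin n)) :
    upperLocalDim ν (T x) ≤ upperLocalDim ν x :=
  upperLocalDim_le_of_measure_ball_le ν (by positivity) (.of_forall
    ((hT.weaken (le_self_add : K ≤ K + 1)).measure_ball_le (by positivity) hν x))

end LocalDim

/-- Each sublevel set `{f < q}` lies in its preimage under `T` and has the same measure. -/
lemma MeasureTheory.MeasurePreserving.comp_ae_eq_of_comp_le {α : Type*} [MeasurableSpace α]
    {μ : Measure α} [IsFiniteMeasure μ] {T : α → α} (hT : MeasurePreserving T μ μ)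
    {f : α → ℝ≥0∞} (hf : Measurable f) (hle : ∀ x, f (T x) ≤ f x) : f ∘ T =ᵐ[μ] f := by
  have hsub : ∀ q : ℚ, {x | f x < ENNReal.ofReal q} =ᵐ[μ] T ⁻¹' {x | f x < ENNReal.ofReal q} :=
    fun q => ae_eq_of_subset_of_measure_ge (fun x hx => (hle x).trans_lt hx)
      (hT.measure_preimage (measurableSet_lt hf measurable_const).nullMeasurableSet).le
      (measurableSet_lt hf measurable_const).nullMeasurableSet (measure_ne_top _ _)
  filter_upwards [ae_all_iff.2 fun q => (hsub q).mem_iff] with x hx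
  refine (hle x).eq_of_not_lt fun hlt => ?_
  obtain ⟨q, -, hTq, hq⟩ := ENNReal.lt_iff_exists_rat_btwn.1 hlt
  exact hq.not_gt ((hx q).2 hTq)

theorem stmt_8_general (n : ℕ) (ν : Measure (EuclideanSpace ℝ (Fin n)))
    [IsProbabilityMeasure ν]
    (K : ℝ≥0)
    (T : EuclideanSpace ℝ (Fin n) → EuclideanSpace ℝ (Fin n))
    (hT : LipschitzWith K T)
    (herg : Ergodic T ν) :
    ∃ c c' : ℝ≥0∞,
      (∀ᵐ x ∂ν, lowerLocalDim ν x = c) ∧ (∀ᵐ x ∂ν, upperLocalDim ν x = c') := by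
  have hν := herg.toMeasurePreserving
  obtain ⟨c, hc⟩ := herg.ae_eq_const_of_ae_eq_comp₀ (measurable_lowerLocalDim ν).nullMeasurable
    (hν.comp_ae_eq_of_comp_le (measurable_lowerLocalDim ν) (lowerLocalDim_apply_le ν hT hν))
  obtain ⟨c', hc'⟩ := herg.ae_eq_const_of_ae_eq_comp₀ (measurable_upperLocalDim ν).nullMeasurable
    (hν.comp_ae_eq_of_comp_le (measurable_upperLocalDim ν) (upperLocalDim_apply_le ν hT hν))
  exact ⟨c, c', hc, hc'⟩

theorem stmt_8 (n : ℕ) (ν : Measure (EuclideanSpace ℝ (Fin n)))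
    [IsProbabilityMeasure ν] (hcompact : IsCompact (measureSupport ν))
    (K : ℝ≥0) (hK : 0 < K)
    (T : EuclideanSpace ℝ (Fin n) → EuclideanSpace ℝ (Fin n))
    (hT : LipschitzWith K T)
    (hTsupp : T '' measureSupport ν ⊆ measureSupport ν)
    (hinv : Measure.map T ν = ν)
    (herg : Ergodic T ν) :
    ∃ c c' : ℝ≥0∞,
      (∀ᵐ x ∂ν, lowerLocalDim ν x = c) ∧ (∀ᵐ x ∂ν, upperLocalDim ν x = c') :=
  stmt_8_general n ν K T hT herg
end
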